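/- arXiv:2309.03128 — 2 statements merged into one kernel-verified Lean document; each statement's English description precedes it below -/
import Mathlib

section
/- Define symbolic deducibility: given a finite set Φ of ground messages (the frame), the set of deducible messages is the least set containing Φ and all public constants (including the generator g), and closed under applying the public constructors (pairing, enc, h, sig-checking, projections, dec, and scalar multiplication φ(s, x) for deducible scalars s and deducible x, and scalar product s*t of deducible scalars). Let a, c, t be three distinct atomic secret scalars none of which is deducible from Φ₀ = { φ(t, g), φ(a, φ(c, g)) } and such that no product involving them is in Φ₀. Then the Diffie–Hellman key φ(t, φ(a, φ(c, g))) is not deducible from Φ₀. -/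
/-- Symbolic messages: atomic names, the generator, the public constructors of
the UTX message theory, scalar multiplication `smul` (written φ in the paper)
and scalar product `mul`. -/
inductive Msg where
  | name : ℕ → Msg
  | gen : Msg
  | pair : Msg → Msg → Msg
  | proj1 : Msg → Msg
  | proj2 : Msg → Msg
  | enc : Msg → Msg → Msg
  | dec : Msg → Msg → Msg
  | hash : Msg → Msg
  | sig : Msg → Msg → Msg
  | pk : Msg → Msg
  | checksig : Msg → Msg → Msg
  | smul : Msg → Msg → Msg
  | mul : Msg → Msg → Msg

/-- Equality of messages modulo the equational theory: the action law
`φ(s*t,x) = φ(s,φ(t,x))`, associativity/commutativity of scalar product, and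
the destructor equations, closed under all contexts. -/
inductive Eqv : Msg → Msg → Prop where
  | refl (m : Msg) : Eqv m m
  | symm {m n} : Eqv m n → Eqv n m
  | trans {m n o} : Eqv m n → Eqv n o → Eqv m o
  | action (s t x : Msg) : Eqv (.smul (.mul s t) x) (.smul s (.smul t x))
  | mul_comm (s t : Msg) : Eqv (.mul s t) (.mul t s)
  | mul_assoc (s t u : Msg) : Eqv (.mul (.mul s t) u) (.mul s (.mul t u))
  | proj1_pair (m n : Msg) : Eqv (.proj1 (.pair m n)) m
  | proj2_pair (m n : Msg) : Eqv (.proj2 (.pair m n)) n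
  | dec_enc (m k : Msg) : Eqv (.dec (.enc m k) k) m
  | checksig_sig (k m : Msg) : Eqv (.checksig (.pk k) (.sig k m)) m
  | pair_cong {a a' b b'} : Eqv a a' → Eqv b b' → Eqv (.pair a b) (.pair a' b')
  | proj1_cong {a a'} : Eqv a a' → Eqv (.proj1 a) (.proj1 a')
  | proj2_cong {a a'} : Eqv a a' → Eqv (.proj2 a) (.proj2 a')
  | enc_cong {a a' b b'} : Eqv a a' → Eqv b b' → Eqv (.enc a b) (.enc a' b')
  | dec_cong {a a' b b'} : Eqv a a' → Eqv b b' → Eqv (.dec a b) (.dec a' b')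
  | hash_cong {a a'} : Eqv a a' → Eqv (.hash a) (.hash a')
  | sig_cong {a a' b b'} : Eqv a a' → Eqv b b' → Eqv (.sig a b) (.sig a' b')
  | pk_cong {a a'} : Eqv a a' → Eqv (.pk a) (.pk a')
  | checksig_cong {a a' b b'} : Eqv a a' → Eqv b b' → Eqv (.checksig a b) (.checksig a' b')
  | smul_cong {a a' b b'} : Eqv a a' → Eqv b b' → Eqv (.smul a b) (.smul a' b')
  | mul_cong {a a' b b'} : Eqv a a' → Eqv b b' → Eqv (.mul a b) (.mul a' b')

/-- Symbolic deducibility: the least set containing the frame `Φ` and the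
public constants, closed under the public operations and the equational
theory. -/
inductive Ded (Φ : Set Msg) : Msg → Prop where
  | ax {m} : m ∈ Φ → Ded Φ m
  | gen : Ded Φ .gen
  | pair {a b} : Ded Φ a → Ded Φ b → Ded Φ (.pair a b)
  | proj1 {a} : Ded Φ a → Ded Φ (.proj1 a)
  | proj2 {a} : Ded Φ a → Ded Φ (.proj2 a)
  | enc {a b} : Ded Φ a → Ded Φ b → Ded Φ (.enc a b)
  | dec {a b} : Ded Φ a → Ded Φ b → Ded Φ (.dec a b)
  | hash {a} : Ded Φ a → Ded Φ (.hash a)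
  | pk {a} : Ded Φ a → Ded Φ (.pk a)
  | checksig {a b} : Ded Φ a → Ded Φ b → Ded Φ (.checksig a b)
  | smul {s x} : Ded Φ s → Ded Φ x → Ded Φ (.smul s x)
  | mul {s t} : Ded Φ s → Ded Φ t → Ded Φ (.mul s t)
  | eqv {m m'} : Ded Φ m → Eqv m m' → Ded Φ m'

/-! ### A semantic model for the equational theory

We interpret messages into streams of pairs of multisets of names:
at each stream position, the first component records the multiset of
atomic names occurring as *scalar factors* of the value (when it is used
as a scalar), and the second records the multiset of atomic names occurring
as *exponents* (when it is used as a group element).  Pairing is stream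
interleaving, projections are the even/odd sub-streams, so all destructor
equations hold; scalar action adds the factor-multiset of the scalar to the
exponent-multiset. -/

abbrev MVal := ℕ → Multiset ℕ × Multiset ℕ

def itl (x y : MVal) : MVal := fun k => if k % 2 = 0 then x (k / 2) else y (k / 2)
def ev (z : MVal) : MVal := fun k => z (2 * k)
def od (z : MVal) : MVal := fun k => z (2 * k + 1)

lemma ev_itl (x y : MVal) : ev (itl x y) = x := by
  funext k
  have h1 : (2 * k) % 2 = 0 := by omega
  have h2 : (2 * k) / 2 = k := by omega
  simp [ev, itl, h1, h2]

lemma od_itl (x y : MVal) : od (itl x y) = y := by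
  funext k
  have h1 : ¬ ((2 * k + 1) % 2 = 0) := by omega
  have h2 : (2 * k + 1) / 2 = k := by omega
  simp [od, itl, h1, h2]

def interp : Msg → MVal
  | .name n => fun _ => ({n}, 0)
  | .gen => fun _ => (0, 0)
  | .pair x y => itl (interp x) (interp y)
  | .proj1 x => ev (interp x)
  | .proj2 x => od (interp x)
  | .enc x y => itl (interp x) (interp y)
  | .dec x _ => ev (interp x)
  | .hash x => interp x
  | .sig x y => itl (interp x) (interp y)
  | .pk x => interp x
  | .checksig _ y => od (interp y)
  | .smul s x => fun k => (0, (interp x k).2 + (interp s 0).1)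
  | .mul s t => fun k => ((interp s k).1 + (interp t k).1, 0)

lemma interp_eqv {m n : Msg} (h : Eqv m n) : interp m = interp n := by
  induction h with
  | refl m => rfl
  | symm _ ih => exact ih.symm
  | trans _ _ ih1 ih2 => exact ih1.trans ih2
  | action s t x =>
      funext k
      simp only [interp, Prod.mk.injEq]
      refine ⟨trivial, by abel⟩
  | mul_comm s t =>
      funext k
      simp only [interp, Prod.mk.injEq]
      exact ⟨add_comm _ _, trivial⟩
  | mul_assoc s t u =>
      funext k
      simp only [interp, Prod.mk.injEq]
      exact ⟨add_assoc _ _ _, trivial⟩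
  | proj1_pair m n => exact ev_itl _ _
  | proj2_pair m n => exact od_itl _ _
  | dec_enc m k => exact ev_itl _ _
  | checksig_sig k m => exact od_itl _ _
  | pair_cong _ _ ih1 ih2 => simp [interp, ih1, ih2]
  | proj1_cong _ ih => simp [interp, ih]
  | proj2_cong _ ih => simp [interp, ih]
  | enc_cong _ _ ih1 ih2 => simp [interp, ih1, ih2]
  | dec_cong _ _ ih1 ih2 => simp [interp, ih1, ih2]
  | hash_cong _ ih => simp [interp, ih]
  | sig_cong _ _ ih1 ih2 => simp [interp, ih1, ih2]
  | pk_cong _ ih => simp [interp, ih]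
  | checksig_cong _ _ ih1 ih2 => simp [interp, ih1, ih2]
  | smul_cong _ _ ih1 ih2 => simp [interp, ih1, ih2]
  | mul_cong _ _ ih1 ih2 => simp [interp, ih1, ih2]

/-- The secrecy invariant: no secret name occurs as a scalar factor, and at
most two secret names (with multiplicity) occur as exponents. -/
def Safe (a c t : ℕ) (x : MVal) : Prop :=
  ∀ k, ((x k).1.count a + (x k).1.count c + (x k).1.count t = 0) ∧
       ((x k).2.count a + (x k).2.count c + (x k).2.count t ≤ 2)

lemma safe_itl {a c t : ℕ} {x y : MVal} (hx : Safe a c t x) (hy : Safe a c t y) :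
    Safe a c t (itl x y) := by
  intro k
  unfold itl
  by_cases h : k % 2 = 0
  · rw [if_pos h]; exact hx _
  · rw [if_neg h]; exact hy _

lemma safe_ev {a c t : ℕ} {x : MVal} (hx : Safe a c t x) : Safe a c t (ev x) :=
  fun k => hx _

lemma safe_od {a c t : ℕ} {x : MVal} (hx : Safe a c t x) : Safe a c t (od x) :=
  fun k => hx _

lemma ded_safe {a c t : ℕ} {Φ : Set Msg}
    (hΦ : ∀ m ∈ Φ, Safe a c t (interp m)) :
    ∀ {m : Msg}, Ded Φ m → Safe a c t (interp m) := by
  intro m hd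
  induction hd with
  | ax h => exact hΦ _ h
  | gen => intro k; simp [interp]
  | pair _ _ ih1 ih2 => exact safe_itl ih1 ih2
  | proj1 _ ih => exact safe_ev ih
  | proj2 _ ih => exact safe_od ih
  | enc _ _ ih1 ih2 => exact safe_itl ih1 ih2
  | dec _ _ ih1 _ => exact safe_ev ih1
  | hash _ ih => exact ih
  | pk _ ih => exact ih
  | checksig _ _ _ ih2 => exact safe_od ih2
  | smul _ _ ihs ihx =>
      intro k
      simp only [interp, Multiset.count_add, Multiset.count_zero]
      constructor
      · simp
      · have h1 := (ihs 0).1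
        have h2 := (ihx k).2
        omega
  | mul _ _ ih1 ih2 =>
      intro k
      simp only [interp, Multiset.count_add, Multiset.count_zero]
      constructor
      · have h1 := (ih1 k).1
        have h2 := (ih2 k).1
        omega
      · omega
  | eqv _ he ih => rwa [interp_eqv he] at ih



/-- Symbolic secrecy of the UTX session key: a passive attacker observing the
terminal's ephemeral key `φ(t,g)` and the card's blinded public key
`φ(a,φ(c,g))` cannot deduce the shared Diffie–Hellman key `φ(t,φ(a,φ(c,g)))`,
provided the atomic secret scalars `a`, `c`, `t` are distinct and themselves
not deducible. -/
theorem utx_session_key_secrecy (a c t : ℕ)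
    (hac : a ≠ c) (hat : a ≠ t) (hct : c ≠ t)
    (Φ₀ : Set Msg)
    (hΦ₀ : Φ₀ = {Msg.smul (.name t) .gen, Msg.smul (.name a) (.smul (.name c) .gen)})
    (hna : ¬ Ded Φ₀ (.name a)) (hnc : ¬ Ded Φ₀ (.name c)) (hnt : ¬ Ded Φ₀ (.name t)) :
    ¬ Ded Φ₀ (.smul (.name t) (.smul (.name a) (.smul (.name c) .gen))) := by
  intro hded
  have hΦ : ∀ m ∈ Φ₀, Safe a c t (interp m) := by
    intro m hm
    rw [hΦ₀] at hm
    rcases hm with hm | hm <;> subst hm <;> intro k <;>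
      simp [interp, Multiset.count_singleton, hac, hat, hct,
        hac.symm, hat.symm, hct.symm]
  have hsafe := ded_safe hΦ hded
  have h0 := (hsafe 0).2
  simp [interp, Multiset.count_singleton, hac, hat, hct,
    hac.symm, hat.symm, hct.symm] at h0
end

section
/- Define an inductive rewrite system on symbolic messages containing Verheul signatures sigv : K → M → M, keys pkv : K → P, verification checksigv : P → M → M, and blinding φ : S → M → M, with rules: checksigv(pkv k, sigv(k, m)) → m, and φ(s, sigv(k, n)) → sigv(k, φ(s, n)). Prove the following characterization: if T is a ground term built only from atomic names, φ, and sigv, and checksigv(pkv k, T) rewrites (in any number of steps, possibly after rewriting inside T) to a term not containing checksigv at the root, then T is equal modulo the blinding rule to φ(s₁, φ(s₂, … φ(s_j, sigv(k, N)) …)) for some scalars s₁,…,s_j and some term N, and checksigv(pkv k, T) rewrites to φ(s₁, … φ(s_j, N) …). -/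
/-- Terms of the Verheul fragment of the UTX message theory: atomic names,
blinding `smul s m` (written φ(s,m) in the paper, with atomic scalars `s : ℕ`),
Verheul signatures `sigv k m` (keys `k : ℕ`), published keys `pkv k`, and
verification `checksigv p m`. -/
inductive VM where
  | name : ℕ → VM
  | smul : ℕ → VM → VM
  | sigv : ℕ → VM → VM
  | pkv : ℕ → VM
  | checksigv : VM → VM → VM

/-- One-step rewriting with the Verheul rules, closed under all contexts. -/
inductive Step : VM → VM → Prop where
  | check (k : ℕ) (m : VM) : Step (.checksigv (.pkv k) (.sigv k m)) m
  | blind (s k : ℕ) (n : VM) : Step (.smul s (.sigv k n)) (.sigv k (.smul s n))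
  | smul_cong (s : ℕ) {m m'} : Step m m' → Step (.smul s m) (.smul s m')
  | sigv_cong (k : ℕ) {m m'} : Step m m' → Step (.sigv k m) (.sigv k m')
  | check_left {p p'} (m : VM) : Step p p' → Step (.checksigv p m) (.checksigv p' m)
  | check_right (p : VM) {m m'} : Step m m' → Step (.checksigv p m) (.checksigv p m')

/-- One-step rewriting with the blinding rule only, closed under all contexts. -/
inductive BlindStep : VM → VM → Prop where
  | blind (s k : ℕ) (n : VM) : BlindStep (.smul s (.sigv k n)) (.sigv k (.smul s n))
  | smul_cong (s : ℕ) {m m'} : BlindStep m m' → BlindStep (.smul s m) (.smul s m')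
  | sigv_cong (k : ℕ) {m m'} : BlindStep m m' → BlindStep (.sigv k m) (.sigv k m')
  | check_left {p p'} (m : VM) : BlindStep p p' → BlindStep (.checksigv p m) (.checksigv p' m)
  | check_right (p : VM) {m m'} : BlindStep m m' → BlindStep (.checksigv p m) (.checksigv p m')

/-- Ground terms built only from atomic names, blinding and Verheul signing. -/
inductive PureTerm : VM → Prop where
  | name (n : ℕ) : PureTerm (.name n)
  | smul (s : ℕ) {m} : PureTerm m → PureTerm (.smul s m)
  | sigv (k : ℕ) {m} : PureTerm m → PureTerm (.sigv k m)

/-- Nested blinding ϕ(s₁, ϕ(s₂, … ϕ(s_j, m) …)). -/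
def nest : List ℕ → VM → VM
  | [], m => m
  | s :: ss, m => .smul s (nest ss m)


lemma blindStep_step {m m' : VM} (h : BlindStep m m') : Step m m' := by
  induction h with
  | blind s k n => exact .blind s k n
  | smul_cong s _ ih => exact .smul_cong s ih
  | sigv_cong k _ ih => exact .sigv_cong k ih
  | check_left m _ ih => exact .check_left m ih
  | check_right p _ ih => exact .check_right p ih

lemma pure_step {m m' : VM} (h : Step m m') (hp : PureTerm m) :
    BlindStep m m' ∧ PureTerm m' := by
  induction h with
  | check k m => cases hp
  | blind s k n =>
    cases hp with
    | smul s h =>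
      cases h with
      | sigv k h => exact ⟨.blind s k n, .sigv k (.smul s h)⟩
  | smul_cong s h ih =>
    cases hp with
    | smul s hp =>
      obtain ⟨h1, h2⟩ := ih hp
      exact ⟨.smul_cong s h1, .smul s h2⟩
  | sigv_cong kk h ih =>
    cases hp with
    | sigv kk hp =>
      obtain ⟨h1, h2⟩ := ih hp
      exact ⟨.sigv_cong kk h1, .sigv kk h2⟩
  | check_left m h ih => cases hp
  | check_right p h ih => cases hp

lemma pkv_no_step {k : ℕ} {p : VM} (h : Step (.pkv k) p) : False := by
  cases h

lemma verif_aux (k : ℕ) : ∀ {v u : VM}, Relation.ReflTransGen Step v u →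
    (∀ p x : VM, u ≠ .checksigv p x) →
    ∀ T', v = VM.checksigv (.pkv k) T' → PureTerm T' →
    ∃ N, Relation.ReflTransGen BlindStep T' (.sigv k N) := by
  intro v u hred
  induction hred using Relation.ReflTransGen.head_induction_on with
  | refl => intro hnr T' hv _; exact absurd hv (by subst hv; exact (hnr _ _ rfl).elim)
  | head h _ ih =>
    intro hnr T' hv hp
    subst hv
    cases h with
    | check => exact ⟨_, Relation.ReflTransGen.refl⟩
    | check_left m h => exact (pkv_no_step h).elim
    | check_right p h =>
      obtain ⟨hb, hp'⟩ := pure_step h hp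
      obtain ⟨N, hN⟩ := ih hnr _ rfl hp'
      exact ⟨N, .head hb hN⟩

lemma rtg_eqv {r : VM → VM → Prop} {a b : VM} (h : Relation.ReflTransGen r a b) :
    Relation.EqvGen r a b := by
  induction h with
  | refl => exact .refl a
  | tail _ hs ih => exact ih.trans _ _ _ (.rel _ _ hs)

lemma rtg_check_right (p : VM) {a b : VM} (h : Relation.ReflTransGen BlindStep a b) :
    Relation.ReflTransGen Step (.checksigv p a) (.checksigv p b) := by
  induction h with
  | refl => exact .refl
  | tail _ hs ih => exact ih.tail (Step.check_right _ (blindStep_step hs))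

/-- Symbolic unforgeability of Verheul self-blindable certificates: if a pure
term `T` verifies under `pkv k` — i.e. `checksigv (pkv k) T` rewrites to some
term without `checksigv` at the root — then `T` is, modulo the blinding rule,
a blinding `φ(s₁, … φ(s_j, sigv(k, N)) …)` of a genuine signature, and the
verification rewrites to `φ(s₁, … φ(s_j, N) …)`. -/
theorem verheul_symbolic_unforgeability (k : ℕ) (T : VM) (hT : PureTerm T)
    (u : VM)
    (hred : Relation.ReflTransGen Step (VM.checksigv (.pkv k) T) u)
    (hnotroot : ∀ p x : VM, u ≠ .checksigv p x) :
    ∃ (ss : List ℕ) (N : VM),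
      Relation.EqvGen BlindStep T (nest ss (.sigv k N)) ∧
      Relation.ReflTransGen Step (VM.checksigv (.pkv k) T) (nest ss N) := by
  obtain ⟨N, hN⟩ := verif_aux k hred hnotroot T rfl hT
  refine ⟨[], N, rtg_eqv hN, (rtg_check_right _ hN).tail (Step.check k N)⟩
end
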